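/- arXiv:1202.3519 — 10 statements merged into one kernel-verified Lean document; each statement's English description precedes it below -/
import Mathlib

section
/- Let W be a type with a preorder ≤ and D a nonempty type. Let P, Q, R : W → D → Prop be monotone and S : W → Prop be monotone. For every v ∈ W: if Γ is forced at v (i.e., (∀ a ∈ D, ∃ b ∈ D, P v b ∧ ∀ w ≥ v, Q w b → R w a) and (∀ w ≥ v, ∃ a ∈ D, ¬ R w a)), then Δ is forced at v (i.e., for every w ≥ v such that ∀ u ≥ w, ∀ a ∈ D, P u a → (Q u a ∨ S u), one has S w). -/
/-- Semantic validity of `Γ → Δ` in constant-domain Kripke semantics, where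
`Γ = ∀x∃y(Py ∧ (Qy → Rx)) ∧ ¬∀xRx` and `Δ = ∀x(Px → (Qx ∨ S)) → S`. -/
theorem gamma_implies_delta
    {W : Type*} [Preorder W] {D : Type*} [Nonempty D]
    (P Q R : W → D → Prop) (S : W → Prop)
    (hP : ∀ v w a, v ≤ w → P v a → P w a)
    (hQ : ∀ v w a, v ≤ w → Q v a → Q w a)
    (hR : ∀ v w a, v ≤ w → R v a → R w a)
    (hS : ∀ v w, v ≤ w → S v → S w)
    (v : W)
    (hΓ₁ : ∀ a : D, ∃ b : D, P v b ∧ ∀ w, v ≤ w → Q w b → R w a)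
    (hΓ₂ : ∀ w, v ≤ w → ∃ a : D, ¬ R w a) :
    ∀ w, v ≤ w → (∀ u, w ≤ u → ∀ a : D, P u a → Q u a ∨ S u) → S w := by
  intro w hvw h
  obtain ⟨a, hna⟩ := hΓ₂ w hvw
  obtain ⟨b, hPb, hb⟩ := hΓ₁ a
  rcases h w le_rfl b (hP v w b hvw hPb) with hq | hs
  · exact absurd (hb w hvw hq) hna
  · exact hs
end

section
/- Let W be a type with a preorder ≤, with a base state v₀ (v₀ ≤ w for every w ∈ W), and let D be a nonempty type. Let P, Q : W → D → Prop be monotone. If there exists a monotone R : W → D → Prop such that Γ is forced at v₀, then for every monotone S : W → Prop, Δ is forced at v₀. -/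
/-- If there exists a monotone `R` such that `Γ = ∀x∃y(Py ∧ (Qy → Rx)) ∧ ¬∀xRx` is
forced at the base state `v₀`, then for every monotone `S`,
`Δ = ∀x(Px → (Qx ∨ S)) → S` is forced at `v₀`. -/
theorem exR_gamma_implies_allS_delta
    {W : Type*} [Preorder W] {D : Type*} [Nonempty D]
    (v₀ : W) (hbase : ∀ w, v₀ ≤ w)
    (P Q : W → D → Prop)
    (hP : ∀ v w a, v ≤ w → P v a → P w a)
    (hQ : ∀ v w a, v ≤ w → Q v a → Q w a)
    (hR : ∃ R : W → D → Prop, (∀ v w a, v ≤ w → R v a → R w a) ∧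
      (∀ a : D, ∃ b : D, P v₀ b ∧ ∀ w, v₀ ≤ w → Q w b → R w a) ∧
      (∀ w, v₀ ≤ w → ∃ a : D, ¬ R w a)) :
    ∀ S : W → Prop, (∀ v w, v ≤ w → S v → S w) →
      ∀ w, v₀ ≤ w → (∀ u, w ≤ u → ∀ a : D, P u a → Q u a ∨ S u) → S w := by
  rintro S hS w hw h
  obtain ⟨R, hRmono, h1, h2⟩ := hR
  obtain ⟨a, hna⟩ := h2 w hw
  obtain ⟨b, hPb, hQR⟩ := h1 a
  rcases h w le_rfl b (hP v₀ w b hw hPb) with hQb | hSw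
  · exact absurd (hQR w hw hQb) hna
  · exact hSw
end

section
/- Let W be a type with a preorder ≤, with a base state v₀ (v₀ ≤ w for every w ∈ W), and let D be a nonempty type. Let P, Q : W → D → Prop be monotone. If there exists a monotone R : W → D → Prop such that Γ is forced at v₀, then the condition I(P,Q) holds: for every w ∈ W there exists a ∈ D with P v₀ a and ¬ Q w a. -/
/-- If there exists a monotone `R` such that `Γ = ∀x∃y(Py ∧ (Qy → Rx)) ∧ ¬∀xRx` is
forced at the base state `v₀`, then the condition `I(P,Q)` holds:
for every state `w` there exists `a` with `P v₀ a` and `¬ Q w a`. -/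
theorem exR_gamma_implies_I
    {W : Type*} [Preorder W] {D : Type*} [Nonempty D]
    (v₀ : W) (hbase : ∀ w, v₀ ≤ w)
    (P Q : W → D → Prop)
    (hP : ∀ v w a, v ≤ w → P v a → P w a)
    (hQ : ∀ v w a, v ≤ w → Q v a → Q w a)
    (hR : ∃ R : W → D → Prop, (∀ v w a, v ≤ w → R v a → R w a) ∧
      (∀ a : D, ∃ b : D, P v₀ b ∧ ∀ w, v₀ ≤ w → Q w b → R w a) ∧
      (∀ w, v₀ ≤ w → ∃ a : D, ¬ R w a)) :
    ∀ w : W, ∃ a : D, P v₀ a ∧ ¬ Q w a := by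
  obtain ⟨R, hmono, h1, h2⟩ := hR
  intro w
  obtain ⟨a, ha⟩ := h2 w (hbase w)
  obtain ⟨b, hPb, hb⟩ := h1 a
  exact ⟨b, hPb, fun hQb => ha (hb w (hbase w) hQb)⟩
end

section
/- Let W be a type with a preorder ≤, with a base state v₀ (v₀ ≤ w for every w ∈ W), and let D be a nonempty type. Let P, Q : W → D → Prop be monotone. If the condition I(P,Q) holds — for every w ∈ W there exists a ∈ D with P v₀ a and ¬ Q w a — then there exists a monotone R : W → D → Prop such that Γ is forced at v₀. -/
/-- If the condition `I(P,Q)` holds — for every state `w` there exists `a` with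
`P v₀ a` and `¬ Q w a` — then there exists a monotone `R` such that
`Γ = ∀x∃y(Py ∧ (Qy → Rx)) ∧ ¬∀xRx` is forced at the base state `v₀`. -/
theorem I_implies_exR_gamma
    {W : Type*} [Preorder W] {D : Type*} [Nonempty D]
    (v₀ : W) (hbase : ∀ w, v₀ ≤ w)
    (P Q : W → D → Prop)
    (hP : ∀ v w a, v ≤ w → P v a → P w a)
    (hQ : ∀ v w a, v ≤ w → Q v a → Q w a)
    (hI : ∀ w : W, ∃ a : D, P v₀ a ∧ ¬ Q w a) :
    ∃ R : W → D → Prop, (∀ v w a, v ≤ w → R v a → R w a) ∧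
      (∀ a : D, ∃ b : D, P v₀ b ∧ ∀ w, v₀ ≤ w → Q w b → R w a) ∧
      (∀ w, v₀ ≤ w → ∃ a : D, ¬ R w a) := by
  refine ⟨fun w a => Q w a ∨ ¬ P v₀ a, ?_, ?_, ?_⟩
  · rintro v w a hvw (h | h)
    · exact Or.inl (hQ v w a hvw h)
    · exact Or.inr h
  · intro a
    by_cases hPa : P v₀ a
    · exact ⟨a, hPa, fun w _ hq => Or.inl hq⟩
    · obtain ⟨b, hPb, _⟩ := hI v₀
      exact ⟨b, hPb, fun w _ _ => Or.inr hPa⟩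
  · intro w _
    obtain ⟨a, hPa, hQa⟩ := hI w
    exact ⟨a, fun h => h.elim hQa (fun h' => h' hPa)⟩
end

section
/- Let W be a type with a preorder ≤ and D a nonempty type, and let P, Q : W → D → Prop be monotone. If the condition J(P,Q) fails — i.e., there exists w ∈ W such that for all a ∈ D, P w a implies Q w a — then there exist a monotone S : W → Prop and a state w ∈ W such that ∀ u ≥ w, ∀ a ∈ D, P u a → (Q u a ∨ S u), but ¬ S w. Consequently, for such an S, Δ is not forced at any base state of W. -/
/-- If the condition `J(P,Q)` fails — there exists a state `w` such that every `a`
with `P w a` satisfies `Q w a` — then there exist a monotone `S` and a state `w` at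
which the antecedent `∀x(Px → (Qx ∨ S))` of `Δ` is forced but `S` fails; consequently,
for such an `S`, `Δ = ∀x(Px → (Qx ∨ S)) → S` is not forced at any base state. -/
theorem not_J_implies_not_delta
    {W : Type*} [Preorder W] {D : Type*} [Nonempty D]
    (P Q : W → D → Prop)
    (hP : ∀ v w a, v ≤ w → P v a → P w a)
    (hQ : ∀ v w a, v ≤ w → Q v a → Q w a)
    (hnJ : ∃ w : W, ∀ a : D, P w a → Q w a) :
    ∃ S : W → Prop, (∀ v w, v ≤ w → S v → S w) ∧
      (∃ w : W, (∀ u, w ≤ u → ∀ a : D, P u a → Q u a ∨ S u) ∧ ¬ S w) ∧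
      (∀ v₀ : W, (∀ x, v₀ ≤ x) →
        ¬ (∀ w, v₀ ≤ w → (∀ u, w ≤ u → ∀ a : D, P u a → Q u a ∨ S u) → S w)) := by
  classical
  obtain ⟨w, hw⟩ := hnJ
  refine ⟨fun u => ∃ v, w ≤ v ∧ v ≤ u ∧ ∃ a, P v a ∧ ¬ Q v a, ?_, ⟨w, ?_, ?_⟩, ?_⟩
  · rintro x y hxy ⟨v, h1, h2, ha⟩
    exact ⟨v, h1, h2.trans hxy, ha⟩
  · intro u hu a hPa
    by_cases hq : Q u a
    · exact Or.inl hq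
    · exact Or.inr ⟨u, hu, le_refl u, a, hPa, hq⟩
  · rintro ⟨v, h1, h2, a, hPa, hQa⟩
    exact hQa (hQ w v a h1 (hw a (hP v w a h2 hPa)))
  · intro v₀ hv₀ hforce
    obtain ⟨v, h1, h2, a, hPa, hQa⟩ := hforce w (hv₀ w) (by
      intro u hu a hPa
      by_cases hq : Q u a
      · exact Or.inl hq
      · exact Or.inr ⟨u, hu, le_refl u, a, hPa, hq⟩)
    exact hQa (hQ w v a h1 (hw a (hP v w a h2 hPa)))
end

section
/- (1) For every state (A,B,C) ∈ W₁ there exists k ∈ v₁ ∪ v₂ with k ∉ A; that is, the semantic condition I(P,Q) holds in M₁: for every state u of M₁ there is a ∈ ℕ⁺ such that P holds of a at the base v and Q fails of a at u. (2) For every a ∈ ℕ⁺, if a ∈ w₁ ∪ w₂ then a ∈ w₁; that is, the semantic condition J(P,Q) fails in M₂: at the base state w of M₂, every a with P w a also satisfies Q w a. -/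
/-- `(A,B,C)` is a quasi-partition of `ℕ⁺`. -/
def IsQP (A B C : Set ℕ+) : Prop :=
  (∀ n : ℕ+, n ∈ A ∨ n ∈ B ∨ n ∈ C) ∧
  (∀ n : ℕ+, ¬ (n ∈ A ∧ n ∈ B)) ∧
  (∀ n : ℕ+, ¬ (n ∈ A ∧ n ∈ C)) ∧
  (∀ n : ℕ+, ¬ (n ∈ B ∧ n ∈ C)) ∧
  A.Infinite ∧ C.Infinite ∧ (B = ∅ ∨ B.Infinite)

/-- `v₁ = {3n}`, the positive multiples of 3. -/
def v₁ : Set ℕ+ := {n | ∃ m : ℕ, (n : ℕ) = 3 * m}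
/-- `v₂ = {3n+1}`. -/
def v₂ : Set ℕ+ := {n | ∃ m : ℕ, (n : ℕ) = 3 * m + 1}
/-- `v₃ = {3n+2}`. -/
def v₃ : Set ℕ+ := {n | ∃ m : ℕ, (n : ℕ) = 3 * m + 2}
/-- `w₁ = {2n}`, the positive even numbers. -/
def w₁ : Set ℕ+ := {n | ∃ m : ℕ, (n : ℕ) = 2 * m}
/-- `w₃ = {2n+1}`, the odd numbers. -/
def w₃ : Set ℕ+ := {n | ∃ m : ℕ, (n : ℕ) = 2 * m + 1}

/-- Membership in `W₁`: a quasi-partition `(A,B,C)` with `v ⊑ (A,B,C)` and `B ∩ v₂` infinite. -/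
def W1 (A B C : Set ℕ+) : Prop :=
  IsQP A B C ∧ (v₁ ⊆ A ∧ C ⊆ v₃) ∧ (B ∩ v₂).Infinite

/-- Membership in `W₂`: a quasi-partition `(A,B,C)` with `w ⊑ (A,B,C)` and `B ≠ ∅`,
together with `w = (w₁, ∅, w₃)` itself. -/
def W2 (A B C : Set ℕ+) : Prop :=
  (IsQP A B C ∧ (w₁ ⊆ A ∧ C ⊆ w₃) ∧ B ≠ ∅) ∨ (A = w₁ ∧ B = (∅ : Set ℕ+) ∧ C = w₃)

/-- (1) The semantic condition `I(P,Q)` holds in `M₁`: for every state `(A,B,C) ∈ W₁`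
there is `k ∈ v₁ ∪ v₂` (i.e. `P` holds of `k` at the base `v`) with `k ∉ A`
(i.e. `Q` fails of `k` at `(A,B,C)`).
(2) The semantic condition `J(P,Q)` fails in `M₂`: at the base state `w = (w₁, ∅, w₃)`
of `M₂`, every `a` with `a ∈ w₁ ∪ ∅` (i.e. `P w a`) satisfies `a ∈ w₁` (i.e. `Q w a`). -/
theorem I_holds_in_M1_and_J_fails_in_M2 :
    (∀ A B C : Set ℕ+, W1 A B C → ∃ k : ℕ+, k ∈ v₁ ∪ v₂ ∧ k ∉ A) ∧
    (∀ a : ℕ+, a ∈ w₁ ∪ (∅ : Set ℕ+) → a ∈ w₁) := by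
  constructor
  · intro A B C h
    obtain ⟨⟨_, hAB, _⟩, _, hinf⟩ := h
    obtain ⟨k, hkB, hkv⟩ := hinf.nonempty
    exact ⟨k, Or.inr hkv, fun hA => hAB k ⟨hA, hkB⟩⟩
  · intro a ha
    rcases ha with h | h
    · exact h
    · exact absurd h (Set.notMem_empty a)
end

section
/- Let (A,B,C), (D,E,F), (G,H,I) be quasi-partitions with (D,E,F) ⊑ (G,H,I), and suppose B is infinite. Let d⃗, e⃗ ∈ (ℕ⁺)^k be such that [d⃗ ↦ e⃗] is a bijection and, for all 1 ≤ l ≤ k: d_l ∈ A implies e_l ∈ D, and d_l ∈ B implies e_l ∈ D ∪ E. Define J = (A \ d⃗) ∪ [d⃗ ↦ e⃗]⁻¹(G), K = (B \ d⃗) ∪ [d⃗ ↦ e⃗]⁻¹(H), L = (C \ d⃗) ∪ [d⃗ ↦ e⃗]⁻¹(I). Then (J,K,L) is a quasi-partition, (A,B,C) ⊑ (J,K,L), B \ d⃗ ⊆ K, and for each 1 ≤ l ≤ k: d_l ∈ J iff e_l ∈ G, and d_l ∈ K iff e_l ∈ H. -/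
/-- `[d⃗ ↦ e⃗]⁻¹(S) = {d_l | e_l ∈ S}`. -/
def preim {k : ℕ} (d e : Fin k → ℕ+) (S : Set ℕ+) : Set ℕ+ :=
  {x | ∃ l : Fin k, d l = x ∧ e l ∈ S}

/-- Lemma 5.2, third asimulation condition, first case (`B` infinite):
the triple `(J,K,L)` defined from `(A,B,C)`, `(G,H,I)` and `[d⃗ ↦ e⃗]` is a
quasi-partition with `(A,B,C) ⊑ (J,K,L)`, `B ∖ d⃗ ⊆ K`, and
`d_l ∈ J ↔ e_l ∈ G`, `d_l ∈ K ↔ e_l ∈ H` for every `l`. -/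
theorem successor_construction_B_infinite {k : ℕ}
    (A B C D E F G H I : Set ℕ+) (d e : Fin k → ℕ+)
    (hABC : IsQP A B C) (hDEF : IsQP D E F) (hGHI : IsQP G H I)
    (hle : D ⊆ G ∧ I ⊆ F)
    (hBinf : B.Infinite)
    (hbij : ∀ l m : Fin k, d l = d m ↔ e l = e m)
    (hA : ∀ l : Fin k, d l ∈ A → e l ∈ D)
    (hB : ∀ l : Fin k, d l ∈ B → e l ∈ D ∪ E) :
    IsQP ((A \ Set.range d) ∪ preim d e G)
         ((B \ Set.range d) ∪ preim d e H)
         ((C \ Set.range d) ∪ preim d e I) ∧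
    (A ⊆ (A \ Set.range d) ∪ preim d e G ∧
      ((C \ Set.range d) ∪ preim d e I) ⊆ C) ∧
    (B \ Set.range d ⊆ (B \ Set.range d) ∪ preim d e H) ∧
    (∀ l : Fin k,
      (d l ∈ (A \ Set.range d) ∪ preim d e G ↔ e l ∈ G) ∧
      (d l ∈ (B \ Set.range d) ∪ preim d e H ↔ e l ∈ H)) := by
  obtain ⟨hcov, hAB, hAC, hBC, hAinf, hCinf, _⟩ := hABC
  obtain ⟨_, hDE, hDF, hEF, _, _, _⟩ := hDEF
  obtain ⟨hcovG, hGH, hGI, hHI, _, _, _⟩ := hGHI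
  have hpre : ∀ (S : Set ℕ+) (l : Fin k), d l ∈ preim d e S ↔ e l ∈ S := by
    intro S l
    constructor
    · rintro ⟨m, hm, hS⟩
      rwa [(hbij m l).mp hm] at hS
    · intro h; exact ⟨l, rfl, h⟩
  have hsub : ∀ S : Set ℕ+, preim d e S ⊆ Set.range d := by
    rintro S x ⟨l, hl, -⟩; exact ⟨l, hl⟩
  have hpredis : ∀ S T : Set ℕ+, (∀ n, ¬ (n ∈ S ∧ n ∈ T)) →
      ∀ x, ¬ (x ∈ preim d e S ∧ x ∈ preim d e T) := by
    rintro S T hST x ⟨⟨l, hl, hlS⟩, ⟨m, hm, hmT⟩⟩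
    exact hST (e l) ⟨hlS, by rwa [(hbij m l).mp (hm.trans hl.symm)] at hmT⟩
  have hdis : ∀ (X Y S T : Set ℕ+), (∀ n, ¬ (n ∈ X ∧ n ∈ Y)) →
      (∀ n, ¬ (n ∈ S ∧ n ∈ T)) →
      ∀ x, ¬ (x ∈ (X \ Set.range d) ∪ preim d e S ∧
               x ∈ (Y \ Set.range d) ∪ preim d e T) := by
    rintro X Y S T hXY hST x ⟨h1 | h1, h2 | h2⟩
    · exact hXY x ⟨h1.1, h2.1⟩
    · exact h1.2 (hsub T h2)
    · exact h2.2 (hsub S h1)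
    · exact hpredis S T hST x ⟨h1, h2⟩
  have hrfin : (Set.range d).Finite := Set.finite_range d
  refine ⟨⟨?_, hdis A B G H hAB hGH, hdis A C G I hAC hGI, hdis B C H I hBC hHI,
      (hAinf.diff hrfin).mono Set.subset_union_left,
      (hCinf.diff hrfin).mono Set.subset_union_left,
      Or.inr ((hBinf.diff hrfin).mono Set.subset_union_left)⟩,
    ⟨?_, ?_⟩, Set.subset_union_left, ?_⟩
  · intro n
    by_cases hn : n ∈ Set.range d
    · obtain ⟨l, rfl⟩ := hn
      rcases hcovG (e l) with h | h | h
      · exact Or.inl (Or.inr ((hpre G l).mpr h))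
      · exact Or.inr (Or.inl (Or.inr ((hpre H l).mpr h)))
      · exact Or.inr (Or.inr (Or.inr ((hpre I l).mpr h)))
    · rcases hcov n with h | h | h
      · exact Or.inl (Or.inl ⟨h, hn⟩)
      · exact Or.inr (Or.inl (Or.inl ⟨h, hn⟩))
      · exact Or.inr (Or.inr (Or.inl ⟨h, hn⟩))
  · intro x hx
    by_cases hn : x ∈ Set.range d
    · obtain ⟨l, rfl⟩ := hn
      exact Or.inr ((hpre G l).mpr (hle.1 (hA l hx)))
    · exact Or.inl ⟨hx, hn⟩
  · rintro x (h | ⟨l, rfl, hI⟩)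
    · exact h.1
    · rcases hcov (d l) with h | h | h
      · exact absurd ⟨hA l h, hle.2 hI⟩ (hDF (e l))
      · rcases hB l h with h' | h'
        · exact absurd ⟨h', hle.2 hI⟩ (hDF (e l))
        · exact absurd ⟨h', hle.2 hI⟩ (hEF (e l))
      · exact h
  · intro l
    constructor
    · constructor
      · rintro (h | h)
        · exact absurd ⟨l, rfl⟩ h.2
        · exact (hpre G l).mp h
      · intro h; exact Or.inr ((hpre G l).mpr h)
    · constructor
      · rintro (h | h)
        · exact absurd ⟨l, rfl⟩ h.2
        · exact (hpre H l).mp h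
      · intro h; exact Or.inr ((hpre H l).mpr h)
end

section
/- Let (A,∅,C), (D,E,F), (G,H,I) be quasi-partitions with (D,E,F) ⊑ (G,H,I). Let d⃗, e⃗ ∈ (ℕ⁺)^k be such that [d⃗ ↦ e⃗] is a bijection and, for all 1 ≤ l ≤ k: d_l ∈ A implies e_l ∈ D. Then there exists a quasi-partition (J,K,L) with K infinite such that (A,∅,C) ⊑ (J,K,L) and, for each 1 ≤ l ≤ k: d_l ∈ J iff e_l ∈ G, and d_l ∈ K iff e_l ∈ H. -/
/-- Lemma 5.2, third asimulation condition, second case (`B = ∅`):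
given quasi-partitions `(A,∅,C)`, `(D,E,F)`, `(G,H,I)` with `(D,E,F) ⊑ (G,H,I)`,
a bijection `[d⃗ ↦ e⃗]` with `d_l ∈ A → e_l ∈ D`, there is a quasi-partition
`(J,K,L)` with `K` infinite, `(A,∅,C) ⊑ (J,K,L)`, and `d_l ∈ J ↔ e_l ∈ G`,
`d_l ∈ K ↔ e_l ∈ H` for every `l`. -/
theorem successor_construction_B_empty {k : ℕ}
    (A C D E F G H I : Set ℕ+) (d e : Fin k → ℕ+)
    (hAC : IsQP A ∅ C) (hDEF : IsQP D E F) (hGHI : IsQP G H I)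
    (hle : D ⊆ G ∧ I ⊆ F)
    (hbij : ∀ l m : Fin k, d l = d m ↔ e l = e m)
    (hA : ∀ l : Fin k, d l ∈ A → e l ∈ D) :
    ∃ J K L : Set ℕ+, IsQP J K L ∧ K.Infinite ∧
      (A ⊆ J ∧ L ⊆ C) ∧
      (∀ l : Fin k, (d l ∈ J ↔ e l ∈ G) ∧ (d l ∈ K ↔ e l ∈ H)) := by
  obtain ⟨hcov, -, hACd, -, hAinf, hCinf, -⟩ := hAC
  obtain ⟨hcovG, hGH, hGI, hHI, -, -, -⟩ := hGHI
  have hA' : ∀ l : Fin k, d l ∈ A → e l ∈ G := fun l h => hle.1 (hA l h)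
  set T : Set ℕ+ := Set.range d with hTdef
  have hs : (C \ T).Infinite := hCinf.diff (Set.finite_range d)
  set f := hs.natEmbedding with hf
  set K₀ : Set ℕ+ := Set.range (fun n => ((f (2*n) : ↥(C \ T)) : ℕ+)) with hK₀
  set L₀ : Set ℕ+ := (C \ T) \ K₀ with hL₀
  have hK₀s : K₀ ⊆ C \ T := by rintro _ ⟨n, rfl⟩; exact (f (2*n)).2
  have hK₀inf : K₀.Infinite := Set.infinite_range_of_injective (by
    intro a b h
    have := f.injective (Subtype.ext h)
    omega)
  have hL₀inf : L₀.Infinite := by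
    have hsub : Set.range (fun n => ((f (2*n+1) : ↥(C \ T)) : ℕ+)) ⊆ L₀ := by
      rintro _ ⟨n, rfl⟩
      refine ⟨(f (2*n+1)).2, ?_⟩
      rintro ⟨m, hm⟩
      have := f.injective (Subtype.ext hm)
      omega
    exact Set.Infinite.mono hsub (Set.infinite_range_of_injective (by
      intro a b h
      have := f.injective (Subtype.ext h)
      omega))
  refine ⟨A ∪ {n | ∃ l, d l = n ∧ e l ∈ G},
          K₀ ∪ {n | ∃ l, d l = n ∧ e l ∈ H},
          L₀ ∪ {n | ∃ l, d l = n ∧ e l ∈ I}, ?_, ?_, ⟨?_, ?_⟩, ?_⟩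
  · refine ⟨?_, ?_, ?_, ?_, ?_, ?_, ?_⟩
    · intro n
      by_cases hn : ∃ l, d l = n
      · obtain ⟨l, rfl⟩ := hn
        rcases hcovG (e l) with hG | hH | hI
        · exact Or.inl (Or.inr ⟨l, rfl, hG⟩)
        · exact Or.inr (Or.inl (Or.inr ⟨l, rfl, hH⟩))
        · exact Or.inr (Or.inr (Or.inr ⟨l, rfl, hI⟩))
      · rcases hcov n with hAn | h0 | hCn
        · exact Or.inl (Or.inl hAn)
        · simp at h0
        · have hnT : n ∉ T := fun ⟨l, hl⟩ => hn ⟨l, hl⟩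
          by_cases hK : n ∈ K₀
          · exact Or.inr (Or.inl (Or.inl hK))
          · exact Or.inr (Or.inr (Or.inl ⟨⟨hCn, hnT⟩, hK⟩))
    · rintro n ⟨(hAn | ⟨l, hl, hG⟩), (hK | ⟨m, hm, hH⟩)⟩
      · exact hACd n ⟨hAn, (hK₀s hK).1⟩
      · subst hm; exact hGH (e m) ⟨hA' m hAn, hH⟩
      · exact (hK₀s hK).2 ⟨l, hl⟩
      · subst hl
        have : e l = e m := (hbij l m).1 hm.symm
        exact hGH (e m) ⟨this ▸ hG, hH⟩
    · rintro n ⟨(hAn | ⟨l, hl, hG⟩), (⟨⟨hCn, hnT⟩, _⟩ | ⟨m, hm, hI⟩)⟩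
      · exact hACd n ⟨hAn, hCn⟩
      · subst hm; exact hGI (e m) ⟨hA' m hAn, hI⟩
      · exact hnT ⟨l, hl⟩
      · subst hl
        have : e l = e m := (hbij l m).1 hm.symm
        exact hGI (e m) ⟨this ▸ hG, hI⟩
    · rintro n ⟨(hK | ⟨l, hl, hH⟩), (hL | ⟨m, hm, hI⟩)⟩
      · exact hL.2 hK
      · subst hm; exact (hK₀s hK).2 ⟨m, rfl⟩
      · exact hL.1.2 ⟨l, hl⟩
      · subst hl
        have : e l = e m := (hbij l m).1 hm.symm
        exact hHI (e m) ⟨this ▸ hH, hI⟩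
    · exact Set.Infinite.mono Set.subset_union_left hAinf
    · exact Set.Infinite.mono Set.subset_union_left hL₀inf
    · exact Or.inr (Set.Infinite.mono Set.subset_union_left hK₀inf)
  · exact Set.Infinite.mono Set.subset_union_left hK₀inf
  · exact Set.subset_union_left
  · rintro n (⟨⟨hCn, _⟩, _⟩ | ⟨m, hm, hI⟩)
    · exact hCn
    · subst hm
      rcases hcov (d m) with hAn | h0 | hCn
      · exact absurd ⟨hA' m hAn, hI⟩ (hGI (e m))
      · simp at h0
      · exact hCn
  · intro l
    constructor
    · constructor
      · rintro (hAn | ⟨m, hm, hG⟩)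
        · exact hA' l hAn
        · have : e m = e l := (hbij m l).1 hm
          exact this ▸ hG
      · exact fun h => Or.inr ⟨l, rfl, h⟩
    · constructor
      · rintro (hK | ⟨m, hm, hH⟩)
        · exact absurd ⟨l, rfl⟩ (hK₀s hK).2
        · have : e m = e l := (hbij m l).1 hm
          exact this ▸ hH
      · exact fun h => Or.inr ⟨l, rfl, h⟩
end

section
/- Let (A,B,C) and (D,E,F) be quasi-partitions, and let d⃗, e⃗ ∈ (ℕ⁺)^k be such that [d⃗ ↦ e⃗] is a bijection and, for all 1 ≤ l ≤ k: d_l ∈ A implies e_l ∈ D, and d_l ∈ B implies e_l ∈ D ∪ E. Then: (i) for every f ∈ ℕ⁺ there exists g ∈ ℕ⁺ such that [(d⃗,f) ↦ (e⃗,g)] is a bijection and the same implications hold for the extended sequences; and (ii) for every g ∈ ℕ⁺ there exists f ∈ ℕ⁺ such that [(d⃗,f) ↦ (e⃗,g)] is a bijection and the same implications hold for the extended sequences. -/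
lemma ext_bij {k : ℕ} (d e : Fin k → ℕ+) (f g : ℕ+)
    (hbij : ∀ l m : Fin k, d l = d m ↔ e l = e m)
    (h : ∀ j : Fin k, f = d j ↔ g = e j) :
    ∀ l m : Fin (k + 1), (Fin.snoc d f : Fin (k + 1) → ℕ+) l =
        (Fin.snoc d f : Fin (k + 1) → ℕ+) m ↔
      (Fin.snoc e g : Fin (k + 1) → ℕ+) l = (Fin.snoc e g : Fin (k + 1) → ℕ+) m := by
  intro l m
  refine Fin.lastCases ?_ ?_ l <;> [skip; intro i] <;>
    refine Fin.lastCases ?_ ?_ m <;> try intro j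
  · simp
  · simpa using h j
  · simpa [eq_comm] using h i
  · simpa using hbij i j

/-- Lemma 5.2, fourth and fifth asimulation conditions: if `[d⃗ ↦ e⃗]` is a bijection
with `d_l ∈ A → e_l ∈ D` and `d_l ∈ B → e_l ∈ D ∪ E`, then (i) every `f` can be matched
by some `g`, and (ii) every `g` can be matched by some `f`, so that the extended
sequences `(d⃗,f)`, `(e⃗,g)` again form a bijection satisfying the same implications. -/
theorem extension_conditions {k : ℕ}
    (A B C D E F : Set ℕ+) (d e : Fin k → ℕ+)
    (hABC : IsQP A B C) (hDEF : IsQP D E F)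
    (hbij : ∀ l m : Fin k, d l = d m ↔ e l = e m)
    (hA : ∀ l : Fin k, d l ∈ A → e l ∈ D)
    (hB : ∀ l : Fin k, d l ∈ B → e l ∈ D ∪ E) :
    (∀ f : ℕ+, ∃ g : ℕ+,
      (∀ l m : Fin (k + 1), (Fin.snoc d f : Fin (k + 1) → ℕ+) l =
          (Fin.snoc d f : Fin (k + 1) → ℕ+) m ↔
        (Fin.snoc e g : Fin (k + 1) → ℕ+) l = (Fin.snoc e g : Fin (k + 1) → ℕ+) m) ∧
      (∀ l : Fin (k + 1), (Fin.snoc d f : Fin (k + 1) → ℕ+) l ∈ A →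
        (Fin.snoc e g : Fin (k + 1) → ℕ+) l ∈ D) ∧
      (∀ l : Fin (k + 1), (Fin.snoc d f : Fin (k + 1) → ℕ+) l ∈ B →
        (Fin.snoc e g : Fin (k + 1) → ℕ+) l ∈ D ∪ E)) ∧
    (∀ g : ℕ+, ∃ f : ℕ+,
      (∀ l m : Fin (k + 1), (Fin.snoc d f : Fin (k + 1) → ℕ+) l =
          (Fin.snoc d f : Fin (k + 1) → ℕ+) m ↔
        (Fin.snoc e g : Fin (k + 1) → ℕ+) l = (Fin.snoc e g : Fin (k + 1) → ℕ+) m) ∧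
      (∀ l : Fin (k + 1), (Fin.snoc d f : Fin (k + 1) → ℕ+) l ∈ A →
        (Fin.snoc e g : Fin (k + 1) → ℕ+) l ∈ D) ∧
      (∀ l : Fin (k + 1), (Fin.snoc d f : Fin (k + 1) → ℕ+) l ∈ B →
        (Fin.snoc e g : Fin (k + 1) → ℕ+) l ∈ D ∪ E)) := by
  have memcond : ∀ (f g : ℕ+), (f ∈ A → g ∈ D) → (f ∈ B → g ∈ D ∪ E) →
      (∀ l : Fin (k + 1), (Fin.snoc d f : Fin (k + 1) → ℕ+) l ∈ A →
        (Fin.snoc e g : Fin (k + 1) → ℕ+) l ∈ D) ∧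
      (∀ l : Fin (k + 1), (Fin.snoc d f : Fin (k + 1) → ℕ+) l ∈ B →
        (Fin.snoc e g : Fin (k + 1) → ℕ+) l ∈ D ∪ E) := by
    intro f g hfA hfB
    constructor <;> intro l <;> refine Fin.lastCases ?_ ?_ l <;> try intro i
    · simpa using hfA (by simpa using i)
    · simpa using hA i
    · simpa using hfB (by simpa using i)
    · simpa using hB i
  constructor
  · intro f
    by_cases hf : ∃ j : Fin k, f = d j
    · obtain ⟨j, hj⟩ := hf
      refine ⟨e j, ext_bij d e f (e j) hbij ?_, ?_⟩
      · intro i; rw [hj]; exact hbij j i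
      · refine memcond f (e j) ?_ ?_ <;> intro hmem <;> rw [hj] at hmem
        · exact hA j hmem
        · exact hB j hmem
    · push_neg at hf
      obtain ⟨g, hgD, hgne⟩ : ∃ g, g ∈ D ∧ g ∉ Set.range e := by
        have := (hDEF.2.2.2.2.1.diff (Set.finite_range e)).nonempty
        obtain ⟨g, hg⟩ := this
        exact ⟨g, hg.1, hg.2⟩
      refine ⟨g, ext_bij d e f g hbij ?_, memcond f g (fun _ => hgD)
        (fun _ => Or.inl hgD)⟩
      intro j
      simp only [hf j, false_iff]
      exact fun h => hgne ⟨j, h.symm⟩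
  · intro g
    by_cases hg : ∃ j : Fin k, g = e j
    · obtain ⟨j, hj⟩ := hg
      refine ⟨d j, ext_bij d e (d j) g hbij ?_, ?_⟩
      · intro i; rw [hj]; exact hbij j i
      · refine memcond (d j) g ?_ ?_ <;> intro hmem <;> rw [hj]
        · exact hA j hmem
        · exact hB j hmem
    · push_neg at hg
      obtain ⟨f, hfC, hfne⟩ : ∃ f, f ∈ C ∧ f ∉ Set.range d := by
        have := (hABC.2.2.2.2.2.1.diff (Set.finite_range d)).nonempty
        obtain ⟨f, hf⟩ := this
        exact ⟨f, hf.1, hf.2⟩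
      refine ⟨f, ext_bij d e f g hbij ?_, memcond f g
        (fun hfA => absurd ⟨hfA, hfC⟩ (hABC.2.2.1 f))
        (fun hfB => absurd ⟨hfB, hfC⟩ (hABC.2.2.2.1 f))⟩
      intro j
      simp only [hg j, iff_false]
      exact fun h => hfne ⟨j, h.symm⟩
end

section
/- Let Z be a CD-asimulation between G-models M₁ and M₂, let A[x₁,…,x_k] be a formula of L with free variables among x₁,…,x_k, and let {i,j} = {1,2}. If (t,d⃗) Z (u,e⃗) with t a state of M_i, u a state of M_j, d⃗ ∈ D_i^k, e⃗ ∈ D_j^k, and t ⊩_i A[d⃗], then u ⊩_j A[e⃗]. -/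
/-- A G-model (constant-domain Kripke model) for a signature with predicate symbols
`σ` of arities `ar`: a preordered set of states with a base state, a nonempty constant
domain, and a monotone interpretation of each predicate symbol. -/
structure GModel (σ : Type) (ar : σ → ℕ) where
  W : Type
  le : W → W → Prop
  le_refl : ∀ w, le w w
  le_trans : ∀ u v w, le u v → le v w → le u w
  base : W
  base_le : ∀ w, le base w
  D : Type
  d_nonempty : Nonempty D
  interp : (P : σ) → W → (Fin (ar P) → D) → Prop
  interp_mono : ∀ (P : σ) (v w), le v w → ∀ as, interp P v as → interp P w as

/-- Formulas of the first-order language over signature `(σ, ar)` with free variables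
among `x₁, …, x_n` (no function symbols or constants); `¬A` abbreviates `A → ⊥`. -/
inductive Formula (σ : Type) (ar : σ → ℕ) : ℕ → Type where
  | atom {n : ℕ} (P : σ) (ts : Fin (ar P) → Fin n) : Formula σ ar n
  | falsum {n : ℕ} : Formula σ ar n
  | and {n : ℕ} (A B : Formula σ ar n) : Formula σ ar n
  | or {n : ℕ} (A B : Formula σ ar n) : Formula σ ar n
  | imp {n : ℕ} (A B : Formula σ ar n) : Formula σ ar n
  | all {n : ℕ} (A : Formula σ ar (n + 1)) : Formula σ ar n
  | ex {n : ℕ} (A : Formula σ ar (n + 1)) : Formula σ ar n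

/-- The forcing relation `w ⊩ A[a₁,…,a_n]` in a G-model. -/
def GModel.force {σ : Type} {ar : σ → ℕ} (M : GModel σ ar) :
    {n : ℕ} → Formula σ ar n → M.W → (Fin n → M.D) → Prop
  | _, .atom P ts, w, as => M.interp P w (fun i => as (ts i))
  | _, .falsum, _, _ => False
  | _, .and A B, w, as => M.force A w as ∧ M.force B w as
  | _, .or A B, w, as => M.force A w as ∨ M.force B w as
  | _, .imp A B, w, as => ∀ u, M.le w u → M.force A u as → M.force B u as
  | _, .all A, w, as => ∀ d : M.D, M.force A w (Fin.snoc as d)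
  | _, .ex A, w, as => ∃ d : M.D, M.force A w (Fin.snoc as d)

/-- A CD-asimulation between the G-models `M₁` and `M₂`: a relation on pairs
(state, finite sequence of domain elements), going in both directions, satisfying
the atomic, successor and two extension conditions. -/
structure CDAsimulation {σ : Type} {ar : σ → ℕ} (M₁ M₂ : GModel σ ar) where
  Z₁ : {k : ℕ} → M₁.W → (Fin k → M₁.D) → M₂.W → (Fin k → M₂.D) → Prop
  Z₂ : {k : ℕ} → M₂.W → (Fin k → M₂.D) → M₁.W → (Fin k → M₁.D) → Prop
  atom₁ : ∀ {k : ℕ} (t : M₁.W) (d : Fin k → M₁.D) (u : M₂.W) (e : Fin k → M₂.D),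
    Z₁ t d u e → ∀ (P : σ) (ts : Fin (ar P) → Fin k),
      M₁.interp P t (fun i => d (ts i)) → M₂.interp P u (fun i => e (ts i))
  atom₂ : ∀ {k : ℕ} (t : M₂.W) (d : Fin k → M₂.D) (u : M₁.W) (e : Fin k → M₁.D),
    Z₂ t d u e → ∀ (P : σ) (ts : Fin (ar P) → Fin k),
      M₂.interp P t (fun i => d (ts i)) → M₁.interp P u (fun i => e (ts i))
  step₁ : ∀ {k : ℕ} (t : M₁.W) (d : Fin k → M₁.D) (u : M₂.W) (e : Fin k → M₂.D),
    Z₁ t d u e → ∀ v : M₂.W, M₂.le u v →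
      ∃ w : M₁.W, M₁.le t w ∧ Z₁ w d v e ∧ Z₂ v e w d
  step₂ : ∀ {k : ℕ} (t : M₂.W) (d : Fin k → M₂.D) (u : M₁.W) (e : Fin k → M₁.D),
    Z₂ t d u e → ∀ v : M₁.W, M₁.le u v →
      ∃ w : M₂.W, M₂.le t w ∧ Z₂ w d v e ∧ Z₁ v e w d
  forth₁ : ∀ {k : ℕ} (t : M₁.W) (d : Fin k → M₁.D) (u : M₂.W) (e : Fin k → M₂.D),
    Z₁ t d u e → ∀ f : M₁.D, ∃ g : M₂.D, Z₁ t (Fin.snoc d f) u (Fin.snoc e g)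
  forth₂ : ∀ {k : ℕ} (t : M₂.W) (d : Fin k → M₂.D) (u : M₁.W) (e : Fin k → M₁.D),
    Z₂ t d u e → ∀ f : M₂.D, ∃ g : M₁.D, Z₂ t (Fin.snoc d f) u (Fin.snoc e g)
  back₁ : ∀ {k : ℕ} (t : M₁.W) (d : Fin k → M₁.D) (u : M₂.W) (e : Fin k → M₂.D),
    Z₁ t d u e → ∀ g : M₂.D, ∃ f : M₁.D, Z₁ t (Fin.snoc d f) u (Fin.snoc e g)
  back₂ : ∀ {k : ℕ} (t : M₂.W) (d : Fin k → M₂.D) (u : M₁.W) (e : Fin k → M₁.D),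
    Z₂ t d u e → ∀ g : M₁.D, ∃ f : M₂.D, Z₂ t (Fin.snoc d f) u (Fin.snoc e g)

/-- Lemma 4.1: if `Z` is a CD-asimulation between `M₁` and `M₂`, `A` a formula with free
variables among `x₁,…,x_k`, `(t,d⃗) Z (u,e⃗)` and `t ⊩ᵢ A[d⃗]`, then `u ⊩ⱼ A[e⃗]`
(in both directions `{i,j} = {1,2}`). -/
theorem asimulation_preserves_forcing {σ : Type} {ar : σ → ℕ}
    {M₁ M₂ : GModel σ ar} (Z : CDAsimulation M₁ M₂)
    {k : ℕ} (A : Formula σ ar k) :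
    (∀ (t : M₁.W) (d : Fin k → M₁.D) (u : M₂.W) (e : Fin k → M₂.D),
      Z.Z₁ t d u e → M₁.force A t d → M₂.force A u e) ∧
    (∀ (t : M₂.W) (d : Fin k → M₂.D) (u : M₁.W) (e : Fin k → M₁.D),
      Z.Z₂ t d u e → M₂.force A t d → M₁.force A u e) := by

  induction A with
  | atom P ts =>
      exact ⟨fun t d u e hz h => Z.atom₁ t d u e hz P ts h,
        fun t d u e hz h => Z.atom₂ t d u e hz P ts h⟩
  | falsum => exact ⟨fun _ _ _ _ _ h => h.elim, fun _ _ _ _ _ h => h.elim⟩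
  | and A B ihA ihB =>
      exact ⟨fun t d u e hz h => ⟨ihA.1 t d u e hz h.1, ihB.1 t d u e hz h.2⟩,
        fun t d u e hz h => ⟨ihA.2 t d u e hz h.1, ihB.2 t d u e hz h.2⟩⟩
  | or A B ihA ihB =>
      exact ⟨fun t d u e hz h => h.imp (ihA.1 t d u e hz) (ihB.1 t d u e hz),
        fun t d u e hz h => h.imp (ihA.2 t d u e hz) (ihB.2 t d u e hz)⟩
  | imp A B ihA ihB =>
      constructor
      · intro t d u e hz h v huv hA
        obtain ⟨w, htw, hz1, hz2⟩ := Z.step₁ t d u e hz v huv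
        exact ihB.1 w d v e hz1 (h w htw (ihA.2 v e w d hz2 hA))
      · intro t d u e hz h v huv hA
        obtain ⟨w, htw, hz2, hz1⟩ := Z.step₂ t d u e hz v huv
        exact ihB.2 w d v e hz2 (h w htw (ihA.1 v e w d hz1 hA))
  | all A ihA =>
      constructor
      · intro t d u e hz h g
        obtain ⟨f, hzf⟩ := Z.back₁ t d u e hz g
        exact ihA.1 t _ u _ hzf (h f)
      · intro t d u e hz h g
        obtain ⟨f, hzf⟩ := Z.back₂ t d u e hz g
        exact ihA.2 t _ u _ hzf (h f)
  | ex A ihA =>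
      constructor
      · intro t d u e hz ⟨f, hf⟩
        obtain ⟨g, hzg⟩ := Z.forth₁ t d u e hz f
        exact ⟨g, ihA.1 t _ u _ hzg hf⟩
      · intro t d u e hz ⟨f, hf⟩
        obtain ⟨g, hzg⟩ := Z.forth₂ t d u e hz f
        exact ⟨g, ihA.2 t _ u _ hzg hf⟩
end
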